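/- arXiv:1306.2548 — 2 statements merged into one kernel-verified Lean document; each statement's English description precedes it below -/
import Mathlib

section
/- Let δ be a semi-flower automaton with state set Q, alphabet A, and initial-final state q0. If a, b ∈ A are letters such that both letter maps ā : Q → Q, q ↦ δ(q,a), and b̄ : Q → Q, q ↦ δ(q,b), are bijective, then ā = b̄. -/
/-- Extension of the transition function `δ : Q → A → Q` to words (lists of letters):
`δ*(q, ε) = q` and `δ*(q, a·w) = δ*(δ(q,a), w)`. -/
def deltaStar {Q A : Type*} (δ : Q → A → Q) : Q → List A → Q
  | q, [] => q
  | q, a :: w => deltaStar δ (δ q a) w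

/-- `δ` (with initial-final state `q0`) is a semi-flower automaton: every state is
accessible and coaccessible, and every cycle passes through `q0` (i.e. for every
nonempty word `w` labelling a cycle at `q`, some prefix of `w` leads from `q` to `q0`). -/
def IsSFA {Q A : Type*} (δ : Q → A → Q) (q0 : Q) : Prop :=
  (∀ q : Q, ∃ w : List A, deltaStar δ q0 w = q) ∧
  (∀ q : Q, ∃ w : List A, deltaStar δ q w = q0) ∧
  (∀ (q : Q) (w : List A), w ≠ [] → deltaStar δ q w = q →
    ∃ u : List A, u <+: w ∧ deltaStar δ q u = q0)

/-- A map `f : Q → Q` is a circular permutation if it is bijective and for all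
`p q : Q` there is `k : ℕ` with `f^[k] p = q`. -/
def IsCircularPerm {Q : Type*} (f : Q → Q) : Prop :=
  Function.Bijective f ∧ ∀ p q : Q, ∃ k : ℕ, f^[k] p = q

/-- The set of branch points going in (bpis): states that are the target of two
distinct transitions. -/
def BPI {Q A : Type*} (δ : Q → A → Q) : Set Q :=
  {q | ∃ pb₁ pb₂ : Q × A, pb₁ ≠ pb₂ ∧ δ pb₁.1 pb₁.2 = q ∧ δ pb₂.1 pb₂.2 = q}

lemma deltaStar_replicate {Q A : Type*} (δ : Q → A → Q) (a : A) (k : ℕ) (q : Q) :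
    deltaStar δ q (List.replicate k a) = (fun q => δ q a)^[k] q := by
  induction k generalizing q with
  | zero => rfl
  | succ k ih =>
      rw [List.replicate_succ]
      show deltaStar δ (δ q a) (List.replicate k a) = _
      rw [ih, Function.iterate_succ_apply]

lemma cancel_iterate {Q : Type*} {g : Q → Q} (hg : Function.Injective g) {q : Q} {i j : ℕ}
    (hij : i ≤ j) (h : g^[i] q = g^[j] q) : g^[j - i] q = q := by
  have h2 : g^[i + (j - i)] q = g^[i] (g^[j - i] q) := Function.iterate_add_apply g i (j - i) q
  rw [show i + (j - i) = j by omega] at h2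
  exact ((hg.iterate i) (h.trans h2)).symm

lemma exists_small_period {Q : Type*} [Fintype Q] {g : Q → Q} (hg : Function.Injective g)
    (q : Q) : ∃ d, 0 < d ∧ d ≤ Fintype.card Q ∧ g^[d] q = q := by
  obtain ⟨i, j, hne, hij⟩ := Fintype.exists_ne_map_eq_of_card_lt
    (fun i : Fin (Fintype.card Q + 1) => g^[(i : ℕ)] q) (by simp)
  have hi := Nat.lt_succ_iff.mp i.isLt
  have hj := Nat.lt_succ_iff.mp j.isLt
  rcases (show (i : ℕ) ≠ (j : ℕ) from fun h => hne (Fin.ext h)).lt_or_gt with h | h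
  · exact ⟨(j : ℕ) - (i : ℕ), by omega, by omega, cancel_iterate hg (le_of_lt h) hij⟩
  · exact ⟨(i : ℕ) - (j : ℕ), by omega, by omega, cancel_iterate hg (le_of_lt h) hij.symm⟩

lemma iterate_mod_period {Q : Type*} {g : Q → Q} {p q0 : Q} {d m : ℕ}
    (hper : g^[d] p = p) (hm : g^[m] p = q0) : g^[m % d] p = q0 := by
  have h3 : g^[m % d + d * (m / d)] p = g^[m % d] (g^[d * (m / d)] p) :=
    Function.iterate_add_apply ..
  have h4 : g^[d * (m / d)] p = p := by
    rw [Function.iterate_mul]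
    exact Function.iterate_fixed hper _
  rw [h4, Nat.mod_add_div] at h3
  rw [← h3]; exact hm

lemma prefix_replicate {A : Type*} {a : A} {k : ℕ} {u : List A}
    (h : u <+: List.replicate k a) : u = List.replicate u.length a ∧ u.length ≤ k := by
  refine ⟨List.eq_replicate_of_mem (fun b hb => List.eq_of_mem_replicate (h.subset hb)), ?_⟩
  simpa using h.length_le

/-- In a semi-flower automaton, any two bijective letter maps are equal. -/
theorem sfa_bijective_letters_eq {Q A : Type*} [Fintype Q] [Nonempty Q] [Fintype A]
    (δ : Q → A → Q) (q0 : Q) (hSFA : IsSFA δ q0)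
    (a b : A) (ha : Function.Bijective (fun q => δ q a))
    (hb : Function.Bijective (fun q => δ q b)) :
    (fun q => δ q a) = (fun q => δ q b) := by
  classical
  obtain ⟨-, -, hcyc⟩ := hSFA
  set g : Q → Q := fun q => δ q a with hg
  set B : Q → Q := fun q => δ q b with hB
  set n := Fintype.card Q with hn
  have hn1 : 1 ≤ n := Fintype.card_pos
  -- every state reaches q0 along a's
  have hreach : ∀ q : Q, ∃ i : ℕ, g^[i] q = q0 := by
    intro q
    obtain ⟨m, hm, -, hmq⟩ := exists_small_period ha.injective q
    obtain ⟨u, hu, hu0⟩ := hcyc q (List.replicate m a)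
      (by intro h; have := congrArg List.length h; simp at this; omega)
      (by rw [deltaStar_replicate]; exact hmq)
    obtain ⟨hurep, -⟩ := prefix_replicate hu
    refine ⟨u.length, ?_⟩
    rw [← deltaStar_replicate, ← hurep]
    exact hu0
  set f : Q → ℕ := fun q => Nat.find (hreach q) with hf
  have hf_spec : ∀ q, g^[f q] q = q0 := fun q => Nat.find_spec (hreach q)
  have hf_min : ∀ q i, g^[i] q = q0 → f q ≤ i := fun q i h => Nat.find_min' (hreach q) h
  have hf_inj : ∀ p q : Q, f p = f q → p = q := by
    intro p q h
    have h2 := (hf_spec p).trans (hf_spec q).symm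
    rw [h] at h2
    exact (ha.injective.iterate (f q)) h2
  have hf0 : f q0 = 0 := Nat.le_zero.mp (hf_min q0 0 rfl)
  have hf_pos : ∀ p, p ≠ q0 → 0 < f p := by
    intro p hp
    rcases Nat.eq_zero_or_pos (f p) with h | h
    · exact absurd (by simpa [h] using hf_spec p) hp
    · exact h
  -- f p < n
  have hf_lt : ∀ p, f p < n := by
    intro p
    by_contra hcon
    push_neg at hcon
    obtain ⟨d, hd0, hdn, hper⟩ := exists_small_period ha.injective p
    have hmod := iterate_mod_period hper (hf_spec p)
    have h1 := hf_min p _ hmod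
    have h2 : f p % d < d := Nat.mod_lt _ hd0
    omega
  -- f decreases by exactly 1 along g off q0
  have hstep : ∀ p, p ≠ q0 → f (g p) + 1 = f p := by
    intro p hp
    have h1 : 0 < f p := hf_pos p hp
    have hle : f (g p) ≤ f p - 1 := by
      apply hf_min
      have h2 : g^[f p - 1 + 1] p = g^[f p - 1] (g p) := Function.iterate_succ_apply ..
      rw [show f p - 1 + 1 = f p by omega] at h2
      rw [← h2]; exact hf_spec p
    have hge : f p ≤ f (g p) + 1 := by
      apply hf_min
      rw [Function.iterate_succ_apply]
      exact hf_spec (g p)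
    omega
  -- f along iterates
  have hiter : ∀ (i : ℕ) (p : Q), i ≤ f p → f (g^[i] p) + i = f p := by
    intro i
    induction i with
    | zero => intro p _; simp
    | succ i ih =>
        intro p hip
        have hp0 : p ≠ q0 := by
          intro h; rw [h, hf0] at hip; omega
        have h1 := hstep p hp0
        have h2 : g^[i + 1] p = g^[i] (g p) := Function.iterate_succ_apply ..
        have h3 := ih (g p) (by omega)
        rw [h2]
        omega
  -- f (g q0) = n - 1
  have htop : f (g q0) = n - 1 := by
    set P := f (g q0) + 1 with hP
    have hP1 : 1 ≤ P := by omega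
    have hPfix : g^[P] q0 = q0 := by
      rw [hP, Function.iterate_succ_apply]
      exact hf_spec (g q0)
    have hall : ∀ z, f z < P := by
      intro z
      rcases Nat.eq_zero_or_pos (f z) with h0 | h0
      · omega
      · have hPt : f z ≤ P * f z := Nat.le_mul_of_pos_left _ (by omega)
        set c := P * f z - f z with hc
        have hcadd : f z + c = P * f z := by omega
        have hfix : g^[P * f z] q0 = q0 := by
          rw [Function.iterate_mul]; exact Function.iterate_fixed hPfix _
        have hz : z = g^[c] q0 := by
          have h3 : g^[f z + c] q0 = g^[f z] (g^[c] q0) := Function.iterate_add_apply ..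
          rw [hcadd, hfix] at h3
          exact (ha.injective.iterate (f z)) ((hf_spec z).trans h3)
        have hmd : c % P + P * (c / P) = c := Nat.mod_add_div c P
        rcases Nat.eq_zero_or_pos (c % P) with hr | hr
        · have hzq : g^[c] q0 = q0 := by
            rw [show c = P * (c / P) by omega, Function.iterate_mul]
            exact Function.iterate_fixed hPfix _
          rw [hzq] at hz
          rw [hz, hf0]; omega
        · have hrP : c % P < P := Nat.mod_lt _ (by omega)
          have hstepz : g^[P - c % P] z = q0 := by
            rw [hz, ← Function.iterate_add_apply]
            rw [show P - c % P + c = P * (c / P) + P by omega]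
            rw [Function.iterate_add_apply, hPfix, Function.iterate_mul]
            exact Function.iterate_fixed hPfix _
          have := hf_min z _ hstepz
          omega
    have hcard : n ≤ P := by
      have hinj : Function.Injective (fun z : Q => (⟨f z, hall z⟩ : Fin P)) := by
        intro x y hxy
        exact hf_inj x y (by simpa using congrArg Fin.val hxy)
      simpa using Fintype.card_le_of_injective _ hinj
    have := hf_lt (g q0)
    omega
  -- key inequality: f (B p) < f p for p ≠ q0
  have hkey : ∀ p, p ≠ q0 → f (B p) < f p := by
    intro p hp
    by_contra hcon
    push_neg at hcon
    set x := B p with hx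
    rcases eq_or_lt_of_le hcon with heq | hlt
    · -- x = p : cycle [b]
      have hxp : p = x := hf_inj p x heq
      obtain ⟨u, hu, hu0⟩ := hcyc p [b] (by simp)
        (by show δ p b = p; exact hxp.symm)
      rcases u with - | ⟨c, v⟩
      · exact hp hu0
      · obtain ⟨hcb, hv⟩ := List.cons_prefix_cons.mp hu
        rw [List.prefix_nil] at hv
        rw [hcb, hv] at hu0
        have h6 : δ p b = q0 := hu0
        rw [← h6] at hp
        exact hp hxp
    · -- f p < f x
      have hp1 : 0 < f p := hf_pos p hp
      set k := f x - f p with hk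
      have hk1 : 1 ≤ k := by omega
      have hgk : g^[k] x = p := by
        apply hf_inj
        have := hiter k x (by omega)
        omega
      obtain ⟨u, hu, hu0⟩ := hcyc p (b :: List.replicate k a) (by simp)
        (by show deltaStar δ (δ p b) _ = p
            rw [deltaStar_replicate]; exact hgk)
      rcases u with - | ⟨c, v⟩
      · exact hp hu0
      · obtain ⟨hcb, hv⟩ := List.cons_prefix_cons.mp hu
        obtain ⟨hvrep, hvlen⟩ := prefix_replicate hv
        rw [hcb, hvrep] at hu0
        have h5 : deltaStar δ p (b :: List.replicate v.length a) = g^[v.length] x := by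
          show deltaStar δ (δ p b) (List.replicate v.length a) = _
          rw [deltaStar_replicate]
        rw [h5] at hu0
        have := hf_min x _ hu0
        omega
  -- comparison and sum argument
  have hle : ∀ p : Q, f (B p) ≤ f (g p) := by
    intro p
    by_cases hp : p = q0
    · rw [hp, htop]
      have := hf_lt (B q0)
      omega
    · have h1 := hstep p hp
      have h2 := hkey p hp
      omega
  have hsum : ∑ p : Q, f (B p) = ∑ p : Q, f (g p) := by
    rw [Function.Bijective.sum_comp hb f, Function.Bijective.sum_comp ha f]
  have heq := (Finset.sum_eq_sum_iff_of_le (fun p _ => hle p)).mp hsum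
  funext p
  exact (hf_inj _ _ (heq p (Finset.mem_univ p))).symm
end

section
/- Let δ be a circular semi-flower automaton with state set Q of cardinality n, alphabet A, initial-final state q0, and distinguished letter a whose letter map ā is a circular permutation. Suppose the set BPI of branch points going in has cardinality m with 1 ≤ m < n. Then for every word x ∈ A*, if the induced map x̄ : Q → Q is not bijective, then the image of x̄ has cardinality at most m. -/
lemma deltaStar_append {Q A : Type*} (δ : Q → A → Q) (q : Q) (y z : List A) :
    deltaStar δ q (y ++ z) = deltaStar δ (deltaStar δ q y) z := by
  induction y generalizing q with
  | nil => rfl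
  | cons b y ih => simp [deltaStar, ih]

/-- In a circular semi-flower automaton with `n` states and `m` bpis, `1 ≤ m < n`,
every non-bijective word map has image of cardinality at most `m`. -/
theorem csfa_nonperm_rank_le_bpi_card {Q A : Type*} [Fintype Q] [Nonempty Q] [Fintype A]
    (δ : Q → A → Q) (q0 : Q) (hSFA : IsSFA δ q0)
    (a : A) (hca : IsCircularPerm (fun q => δ q a))
    (n m : ℕ) (hn : Fintype.card Q = n) (hm : (BPI δ).ncard = m)
    (hm1 : 1 ≤ m) (hmn : m < n)
    (x : List A) (hx : ¬ Function.Bijective (fun q => deltaStar δ q x)) :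
    (Set.range (fun q => deltaStar δ q x)).ncard ≤ m := by
  induction x using List.reverseRecOn with
  | nil =>
    exact absurd Function.bijective_id hx
  | append_singleton y b ih =>
    have hsplit : (fun q => deltaStar δ q (y ++ [b]))
        = (fun q => δ q b) ∘ (fun q => deltaStar δ q y) := by
      funext q
      simp [deltaStar_append, deltaStar]
    by_cases hb : b = a
    · subst hb
      rw [hsplit] at hx ⊢
      have hy : ¬ Function.Bijective (fun q => deltaStar δ q y) := by
        intro h
        exact hx (hca.1.comp h)
      have := ih hy
      rwa [Set.range_comp, Set.ncard_image_of_injective _ hca.1.injective]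
    · -- every state in the range of b̄ is a bpi
      have hsub : Set.range (fun q => deltaStar δ q (y ++ [b])) ⊆ BPI δ := by
        rintro s ⟨q, rfl⟩
        obtain ⟨p, hp⟩ := hca.1.surjective (deltaStar δ q (y ++ [b]))
        refine ⟨(deltaStar δ q y, b), (p, a), ?_, ?_, hp⟩
        · intro h
          exact hb (congrArg Prod.snd h)
        · simp [deltaStar_append, deltaStar]
      calc (Set.range (fun q => deltaStar δ q (y ++ [b]))).ncard
          ≤ (BPI δ).ncard := Set.ncard_le_ncard hsub (Set.toFinite _)
        _ = m := hm
end
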